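/- Let ρ₃ : G → ℂ* be projection to the third coordinate. Then the image of ρ₃ is exactly the group μ_{mr/gcd(m+s,r)} of (mr/gcd(m+s,r))-th roots of unity in ℂ*, and the kernel of ρ₃ has cardinality gcd(m+s,r). (This realizes (m₃, r₃) = (gcd(m+s,r), m·r/gcd(m+s,r)).) -/

import Mathlib

open Complex

/-- The homomorphism `φ : (ℂ*)³ → (ℂ*)³`, `φ(t₁,t₂,t₃) = (t₁^r, t₁^{-s} t₂^m, t₁t₂t₃)`. -/
noncomputable def phi (r m s : ℕ) : (ℂˣ × ℂˣ × ℂˣ) →* (ℂˣ × ℂˣ × ℂˣ) where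
  toFun t := (t.1 ^ r, t.1 ^ (-(s : ℤ)) * t.2.1 ^ m, t.1 * t.2.1 * t.2.2)
  map_one' := by simp
  map_mul' x y := by
    refine Prod.ext ?_ (Prod.ext ?_ ?_) <;> dsimp <;>
      simp [mul_pow, mul_zpow, mul_comm, mul_assoc, mul_left_comm]

/-- `exp z` as an element of `ℂˣ`. -/
noncomputable def unitExp (z : ℂ) : ℂˣ := Units.mk0 (Complex.exp z) (Complex.exp_ne_zero z)

/-- `η₁ = (e^{2πi/r}, e^{2πi s/(rm)}, e^{-2πi(m+s)/(rm)})`. -/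
noncomputable def eta1 (r m s : ℕ) : ℂˣ × ℂˣ × ℂˣ :=
  (unitExp (2 * (Real.pi : ℂ) * Complex.I / (r : ℂ)),
   unitExp (2 * (Real.pi : ℂ) * Complex.I * (s : ℂ) / ((r : ℂ) * (m : ℂ))),
   unitExp (-(2 * (Real.pi : ℂ) * Complex.I * ((m : ℂ) + (s : ℂ))) / ((r : ℂ) * (m : ℂ))))

/-- `η₂ = (1, e^{2πi/m}, e^{-2πi/m})`. -/
noncomputable def eta2 (m : ℕ) : ℂˣ × ℂˣ × ℂˣ :=
  (1,
   unitExp (2 * (Real.pi : ℂ) * Complex.I / (m : ℂ)),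
   unitExp (-(2 * (Real.pi : ℂ) * Complex.I) / (m : ℂ)))

/-- `ρ₁ : G → ℂ*`, projection of `G = ker φ` to the first coordinate. -/
noncomputable def rho1 (r m s : ℕ) : MonoidHom.ker (phi r m s) →* ℂˣ :=
  (MonoidHom.fst ℂˣ (ℂˣ × ℂˣ)).comp (MonoidHom.ker (phi r m s)).subtype

/-- `ρ₂ : G → ℂ*`, projection of `G = ker φ` to the second coordinate. -/
noncomputable def rho2 (r m s : ℕ) : MonoidHom.ker (phi r m s) →* ℂˣ :=
  ((MonoidHom.fst ℂˣ ℂˣ).comp (MonoidHom.snd ℂˣ (ℂˣ × ℂˣ))).comp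
    (MonoidHom.ker (phi r m s)).subtype

/-- `ρ₃ : G → ℂ*`, projection of `G = ker φ` to the third coordinate. -/
noncomputable def rho3 (r m s : ℕ) : MonoidHom.ker (phi r m s) →* ℂˣ :=
  ((MonoidHom.snd ℂˣ ℂˣ).comp (MonoidHom.snd ℂˣ (ℂˣ × ℂˣ))).comp
    (MonoidHom.ker (phi r m s)).subtype

/-!
Since `φ` forces `t₁ ∈ μ_r`, `t₂ ^ m = t₁ ^ s` and `t₃ = (t₁ t₂)⁻¹`, the first projection
`ρ₁ : G → μ_r` is onto (ℂ is algebraically closed) with kernel `μ_m`, so `|G| = rm`. On the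
kernel of `ρ₃` we have `t₂ = t₁⁻¹`, whence `t₁ ^ (m + s) = t₁ ^ r = 1`: this kernel is
`μ_{gcd(m+s,r)}`. Finally `t₃ ^ m = t₁ ^ -(m + s)` shows that the image of `ρ₃` lies in
`μ_{mr/gcd(m+s,r)}`, and it has `|G| / |ker ρ₃| = rm / gcd(m+s,r)` elements, so it is all of it.
-/

theorem IsAlgClosed.exists_units_pow_eq {K : Type*} [Field K] [IsAlgClosed K] (x : Kˣ) {n : ℕ}
    (hn : n ≠ 0) : ∃ y : Kˣ, y ^ n = x := by
  obtain ⟨y, hy⟩ := IsAlgClosed.exists_pow_nat_eq (x : K) (Nat.pos_of_ne_zero hn)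
  have hy0 : y ≠ 0 := by
    rintro rfl
    exact x.ne_zero (by rw [← hy, zero_pow hn])
  exact ⟨Units.mk0 y hy0, Units.ext hy⟩

section

variable {r m s : ℕ}

theorem mem_ker_phi {t : ℂˣ × ℂˣ × ℂˣ} :
    t ∈ (phi r m s).ker ↔ t.1 ^ r = 1 ∧ t.2.1 ^ m = t.1 ^ s ∧ t.1 * t.2.1 * t.2.2 = 1 := by
  rw [MonoidHom.mem_ker]
  change (t.1 ^ r, t.1 ^ (-(s : ℤ)) * t.2.1 ^ m, t.1 * t.2.1 * t.2.2) = 1 ↔ _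
  simp only [Prod.ext_iff, Prod.fst_one, Prod.snd_one, zpow_neg, zpow_natCast, inv_mul_eq_one]
  exact and_congr_right fun _ => and_congr_left fun _ => eq_comm

theorem snd_snd_eq_of_mem_ker_phi {t : ℂˣ × ℂˣ × ℂˣ} (ht : t ∈ (phi r m s).ker) :
    t.2.2 = (t.1 * t.2.1)⁻¹ :=
  eq_inv_of_mul_eq_one_right (mem_ker_phi.mp ht).2.2

theorem mul_pow_of_mem_ker_phi {t : ℂˣ × ℂˣ × ℂˣ} (ht : t ∈ (phi r m s).ker) :
    (t.1 * t.2.1) ^ m = t.1 ^ (m + s) := by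
  rw [mul_pow, (mem_ker_phi.mp ht).2.1, pow_add]

theorem range_rho1 (hm : m ≠ 0) : (rho1 r m s).range = rootsOfUnity r ℂ := by
  ext a
  refine ⟨?_, fun ha => ?_⟩
  · rintro ⟨t, rfl⟩
    exact (_root_.mem_rootsOfUnity _ _).mpr (mem_ker_phi.mp t.2).1
  · obtain ⟨b, hb⟩ := IsAlgClosed.exists_units_pow_eq (a ^ s) hm
    have ha : a ^ r = 1 := (_root_.mem_rootsOfUnity _ _).mp ha
    exact ⟨⟨(a, b, (a * b)⁻¹), mem_ker_phi.mpr ⟨ha, hb, mul_inv_cancel _⟩⟩, rfl⟩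

def kerRho1EquivRootsOfUnity : (rho1 r m s).ker ≃ rootsOfUnity m ℂ where
  toFun t := ⟨t.1.1.2.1, by
    have hb := (mem_ker_phi.mp t.1.2).2.1
    rwa [show t.1.1.1 = 1 from t.2, one_pow] at hb⟩
  invFun b := ⟨⟨(1, b, b⁻¹), mem_ker_phi.mpr ⟨one_pow r, by
    rw [one_pow]; exact (_root_.mem_rootsOfUnity _ _).mp b.2, by simp⟩⟩, rfl⟩
  left_inv t := by
    have ha : t.1.1.1 = 1 := t.2
    refine Subtype.ext (Subtype.ext (Prod.ext ha.symm (Prod.ext rfl ?_)))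
    rw [snd_snd_eq_of_mem_ker_phi t.1.2, ha, one_mul]
  right_inv b := rfl

theorem mul_eq_one_of_mem_ker_rho3 {t : (phi r m s).ker} (ht : t ∈ (rho3 r m s).ker) :
    t.1.1 * t.1.2.1 = 1 := by
  simpa [show t.1.2.2 = 1 from ht] using (mem_ker_phi.mp t.2).2.2

def kerRho3EquivRootsOfUnity : (rho3 r m s).ker ≃ rootsOfUnity (Nat.gcd (m + s) r) ℂ where
  toFun t := ⟨t.1.1.1, by
    have hms := mul_pow_of_mem_ker_phi t.1.2
    rw [mul_eq_one_of_mem_ker_rho3 t.2, one_pow] at hms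
    exact (_root_.mem_rootsOfUnity _ _).mpr
      (pow_gcd_eq_one.mpr ⟨hms.symm, (mem_ker_phi.mp t.1.2).1⟩)⟩
  invFun a := ⟨⟨(a, a⁻¹, 1), by
    have hms := rootsOfUnity_le_of_dvd (Nat.gcd_dvd_left (m + s) r) a.2
    have hr := rootsOfUnity_le_of_dvd (Nat.gcd_dvd_right (m + s) r) a.2
    rw [_root_.mem_rootsOfUnity] at hms hr
    refine mem_ker_phi.mpr ⟨hr, ?_, by simp⟩
    rw [inv_pow, inv_eq_iff_mul_eq_one, ← pow_add, hms]⟩, rfl⟩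
  left_inv t := by
    refine Subtype.ext (Subtype.ext (Prod.ext rfl (Prod.ext ?_ t.2.symm)))
    exact inv_eq_of_mul_eq_one_right (mul_eq_one_of_mem_ker_rho3 t.2)
  right_inv a := rfl

theorem card_ker_phi (hr : r ≠ 0) (hm : m ≠ 0) : Nat.card (phi r m s).ker = r * m := by
  have : NeZero r := ⟨hr⟩
  have : NeZero m := ⟨hm⟩
  rw [← (rho1 r m s).ker.card_mul_index, Subgroup.index_ker, range_rho1 hm,
    Nat.card_congr kerRho1EquivRootsOfUnity, Complex.card_rootsOfUnity, Complex.card_rootsOfUnity,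
    mul_comm]

theorem card_ker_rho3 (hr : r ≠ 0) : Nat.card (rho3 r m s).ker = Nat.gcd (m + s) r := by
  have : NeZero (Nat.gcd (m + s) r) := ⟨Nat.gcd_ne_zero_right hr⟩
  rw [Nat.card_congr kerRho3EquivRootsOfUnity, Complex.card_rootsOfUnity]

theorem card_range_rho3 (hr : r ≠ 0) (hm : m ≠ 0) :
    Nat.card (rho3 r m s).range = m * r / Nat.gcd (m + s) r := by
  have h := (rho3 r m s).ker.card_mul_index
  rw [Subgroup.index_ker, card_ker_rho3 hr, card_ker_phi hr hm] at h
  rw [mul_comm m r, ← h,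
    Nat.mul_div_cancel_left _ (Nat.gcd_pos_of_pos_right _ (Nat.pos_of_ne_zero hr))]

theorem range_rho3_le : (rho3 r m s).range ≤ rootsOfUnity (m * r / Nat.gcd (m + s) r) ℂ := by
  rintro _ ⟨t, rfl⟩
  set d := Nat.gcd (m + s) r
  have hdr : d ∣ r := Nat.gcd_dvd_right (m + s) r
  obtain ⟨k, hk⟩ : d ∣ m + s := Nat.gcd_dvd_left (m + s) r
  have hexp : (m + s) * (r / d) = r * k := by
    rw [hk, mul_comm _ k, mul_assoc, Nat.mul_div_cancel' hdr, mul_comm]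
  rw [_root_.mem_rootsOfUnity]
  change t.1.2.2 ^ _ = 1
  rw [Nat.mul_div_assoc _ hdr, pow_mul, snd_snd_eq_of_mem_ker_phi t.2, inv_pow,
    mul_pow_of_mem_ker_phi t.2, inv_pow, ← pow_mul, hexp, pow_mul, (mem_ker_phi.mp t.2).1,
    one_pow, inv_one]

end

theorem rho3_range_and_ker_general (r m s : ℕ) (hr : 1 ≤ r) (hm : 1 ≤ m) :
    (rho3 r m s).range = rootsOfUnity (m * r / Nat.gcd (m + s) r) ℂ ∧
      Nat.card (MonoidHom.ker (rho3 r m s)) = Nat.gcd (m + s) r := by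
  have hr0 : r ≠ 0 := Nat.one_le_iff_ne_zero.mp hr
  have hm0 : m ≠ 0 := Nat.one_le_iff_ne_zero.mp hm
  have : NeZero (m * r / Nat.gcd (m + s) r) :=
    ⟨Nat.div_ne_zero_iff.mpr ⟨Nat.gcd_ne_zero_right hr0, Nat.le_of_dvd (by positivity)
      (dvd_mul_of_dvd_right (Nat.gcd_dvd_right _ _) m)⟩⟩
  refine ⟨Subgroup.eq_of_le_of_card_ge range_rho3_le ?_, card_ker_rho3 hr0⟩
  rw [card_range_rho3 hr0 hm0, Complex.card_rootsOfUnity]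

/-- The image of `ρ₃ : G → ℂ*` is exactly `μ_{mr/gcd(m+s,r)}`, and the kernel of `ρ₃`
has cardinality `gcd(m+s,r)`. -/
theorem rho3_range_and_ker (r m s : ℕ) (hr : 1 ≤ r) (hm : 1 ≤ m) (hs : s ≤ r - 1) :
    (rho3 r m s).range = rootsOfUnity (m * r / Nat.gcd (m + s) r) ℂ ∧
      Nat.card (MonoidHom.ker (rho3 r m s)) = Nat.gcd (m + s) r :=
  rho3_range_and_ker_general r m s hr hm
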